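/- arXiv:2505.13221 — 3 statements merged into one kernel-verified Lean document; each statement's English description precedes it below -/
import Mathlib

section
/- Every topological automorphism of the additive group of the p-adic numbers ℚ_p is multiplication by a nonzero element of ℚ_p. -/
/-- Every topological automorphism of the additive group of `ℚ_p` is multiplication
by a nonzero `p`-adic number. -/
theorem stmt2 (p : ℕ) [Fact p.Prime] (α : ℚ_[p] ≃+ ℚ_[p])
    (hα : Continuous α) (hα' : Continuous α.symm) :
    ∃ c : ℚ_[p], c ≠ 0 ∧ ∀ x : ℚ_[p], α x = c * x := by
  have hd : DenseRange ((↑) : ℚ → ℚ_[p]) := by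
    rw [Metric.denseRange_iff]
    intro x ε hε
    obtain ⟨r, hr⟩ := Padic.rat_dense (p := p) x hε
    exact ⟨r, by simpa [dist_eq_norm] using hr⟩
  have key : ∀ x : ℚ_[p], α x = x * α 1 := by
    have := hd.equalizer hα (by continuity : Continuous fun x : ℚ_[p] => x * α 1) ?_
    · exact fun x => congrFun this x
    · funext q
      have : α ((q : ℚ) • (1 : ℚ_[p])) = (q : ℚ) • α 1 :=
        map_rat_smul α.toAddMonoidHom q 1
      simpa [Rat.smul_def] using this
  refine ⟨α 1, ?_, fun x => by rw [key x, mul_comm]⟩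
  intro h
  have : (1 : ℚ_[p]) = 0 := α.injective (by simp [h])
  simp at this
end

section
/- Let Y be a compact abelian topological group and f : Y → ℝ a continuous function satisfying Δ_h^{n+1} f = 0 for all h ∈ Y (i.e., f is a continuous polynomial on Y). Then f is constant. -/
/-!
Along the orbit `m ↦ y + m • h` a function with `Δ_h^{n+1} f = 0` is a polynomial in `m`, and a
bounded polynomial in `m` is constant. By induction on `n` (applied to the bounded function
`Δ_h f`) it suffices to treat `Δ_h (Δ_h f) = 0`; then `f (y + m • h) = f y + m • Δ_h f y` grows
linearly in `m` unless `Δ_h f y = 0`. A continuous function on a compact space is bounded.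
-/

/-- The finite difference operator `Δ_h f (y) = f (y + h) - f y`. -/
def finDiffR {Y : Type*} [AddCommGroup Y] (h : Y) (f : Y → ℝ) : Y → ℝ :=
  fun y => f (y + h) - f y

open fwdDiff

lemma finDiffR_eq_fwdDiff {Y : Type*} [AddCommGroup Y] (h : Y) : finDiffR h = fwdDiff h := rfl

section BoundedFwdDiff

variable {M G : Type*} [AddCommMonoid M] [AddCommGroup G] {h : M}

lemma apply_add_nsmul_of_fwdDiff_eq_zero {f : M → G} (hf : Δ_[h] f = 0) (y : M) (m : ℕ) :
    f (y + m • h) = f y := by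
  induction m with
  | zero => simp
  | succ m ih =>
    have hstep : f (y + m • h + h) - f (y + m • h) = 0 := congrFun hf (y + m • h)
    rw [succ_nsmul, ← add_assoc, ← ih]
    exact sub_eq_zero.mp hstep

lemma apply_add_nsmul_of_fwdDiff_fwdDiff_eq_zero {f : M → G} (hf : Δ_[h] (Δ_[h] f) = 0)
    (y : M) (m : ℕ) : f (y + m • h) = f y + m • Δ_[h] f y := by
  induction m with
  | zero => simp
  | succ m ih =>
    have hstep : f (y + m • h + h) = f (y + m • h) + Δ_[h] f (y + m • h) := by
      simp [fwdDiff]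
    rw [succ_nsmul, ← add_assoc, hstep, ih, apply_add_nsmul_of_fwdDiff_eq_zero hf, succ_nsmul,
      add_assoc]

variable {E : Type*} [NormedAddCommGroup E] [NormedSpace ℝ E]

lemma fwdDiff_eq_zero_of_norm_le_of_fwdDiff_fwdDiff_eq_zero {f : M → E} {C : ℝ}
    (hC : ∀ y, ‖f y‖ ≤ C) (hf : Δ_[h] (Δ_[h] f) = 0) : Δ_[h] f = 0 := by
  funext y
  have hgrowth : ∀ m : ℕ, m * ‖Δ_[h] f y‖ ≤ C + C := fun m => by
    calc (m : ℝ) * ‖Δ_[h] f y‖ = ‖f (y + m • h) - f y‖ := by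
          rw [apply_add_nsmul_of_fwdDiff_fwdDiff_eq_zero hf, add_sub_cancel_left,
            RCLike.norm_nsmul ℝ, nsmul_eq_mul]
      _ ≤ ‖f (y + m • h)‖ + ‖f y‖ := norm_sub_le _ _
      _ ≤ C + C := add_le_add (hC _) (hC _)
  by_contra hne
  have hpos : 0 < ‖Δ_[h] f y‖ := norm_pos_iff.mpr hne
  obtain ⟨m, hm⟩ := exists_nat_gt ((C + C) / ‖Δ_[h] f y‖)
  exact (hgrowth m).not_gt ((div_lt_iff₀ hpos).mp hm)

lemma fwdDiff_eq_zero_of_norm_le_of_fwdDiff_iter_eq_zero {f : M → E} {C : ℝ} {n : ℕ}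
    (hC : ∀ y, ‖f y‖ ≤ C) (hf : (Δ_[h])^[n + 1] f = 0) : Δ_[h] f = 0 := by
  induction n generalizing f C with
  | zero => exact hf
  | succ n ih =>
    have hΔC : ∀ y, ‖Δ_[h] f y‖ ≤ C + C := fun y =>
      (norm_sub_le _ _).trans (add_le_add (hC _) (hC _))
    exact fwdDiff_eq_zero_of_norm_le_of_fwdDiff_fwdDiff_eq_zero hC (ih hΔC hf)

end BoundedFwdDiff

theorem stmt7_general {Y : Type*} [AddCommGroup Y] [TopologicalSpace Y]
    [CompactSpace Y] (f : Y → ℝ) (hf : Continuous f) (n : ℕ)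
    (hpoly : ∀ h : Y, (finDiffR h)^[n + 1] f = 0) :
    ∀ y₁ y₂ : Y, f y₁ = f y₂ := by
  obtain ⟨C, hC⟩ := isCompact_univ.exists_bound_of_continuousOn hf.continuousOn
  intro y₁ y₂
  have hΔ : Δ_[y₂ - y₁] f = 0 := by
    refine fwdDiff_eq_zero_of_norm_le_of_fwdDiff_iter_eq_zero (n := n)
      (fun y => hC y (Set.mem_univ y)) ?_
    rw [← finDiffR_eq_fwdDiff]
    exact hpoly _
  have hstep : f (y₁ + (y₂ - y₁)) - f y₁ = 0 := congrFun hΔ y₁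
  rwa [add_sub_cancel, sub_eq_zero, eq_comm] at hstep

/-- A continuous polynomial on a compact abelian topological group is constant. -/
theorem stmt7 {Y : Type*} [AddCommGroup Y] [TopologicalSpace Y] [IsTopologicalAddGroup Y]
    [CompactSpace Y] (f : Y → ℝ) (hf : Continuous f) (n : ℕ)
    (hpoly : ∀ h : Y, (finDiffR h)^[n + 1] f = 0) :
    ∀ y₁ y₂ : Y, f y₁ = f y₂ :=
  stmt7_general f hf n hpoly
end

section
/- Let X be a locally compact abelian group, α a topological automorphism of X, and ξ₁, ξ₂ independent X-valued random variables. If the conditional distribution of L₂ = ξ₁ + αξ₂ given L₁ = ξ₁ + ξ₂ is symmetric, then the linear forms M₁ = (I+α)ξ₁ + 2αξ₂ and M₂ = 2ξ₁ + (I+α)ξ₂ are independent. -/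
open MeasureTheory ProbabilityTheory

/-!
Put `L₁ = ξ₁ + ξ₂`, `L₂ = ξ₁ + αξ₂` and `F(a, b) = (αa + b, a + b)`. Then `F(L₁, L₂) = (M₁, M₂)`,
while `F(L₁, -L₂) = ((α - I)ξ₁, (I - α)ξ₂)` is a pair of functions of `ξ₁` and `ξ₂` respectively,
hence independent. Symmetry says `(L₁, L₂)` and `(L₁, -L₂)` have the same law, so `(M₁, M₂)`
has the law of an independent pair.
-/

theorem ProbabilityTheory.IndepFun.of_identDistrib_prodMk
    {Ω Ω' β γ : Type*} [MeasurableSpace Ω] [MeasurableSpace Ω'] [MeasurableSpace β]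
    [MeasurableSpace γ] {μ : Measure Ω} {ν : Measure Ω'} [IsFiniteMeasure μ] [IsFiniteMeasure ν]
    {f : Ω → β} {g : Ω → γ} {f' : Ω' → β} {g' : Ω' → γ}
    (h : IdentDistrib (fun ω => (f ω, g ω)) (fun ω' => (f' ω', g' ω')) μ ν)
    (h' : IndepFun f' g' ν) : IndepFun f g μ := by
  have hf : IdentDistrib f f' μ ν := h.comp measurable_fst
  have hg : IdentDistrib g g' μ ν := h.comp measurable_snd
  rw [indepFun_iff_map_prod_eq_prod_map_map hf.aemeasurable_fst hg.aemeasurable_fst, h.map_eq,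
    hf.map_eq, hg.map_eq]
  exact (indepFun_iff_map_prod_eq_prod_map_map hf.aemeasurable_snd hg.aemeasurable_snd).mp h'

theorem stmt14_general {X : Type*} [TopologicalSpace X] [AddCommGroup X] [IsTopologicalAddGroup X]
    [SecondCountableTopology X]
    [MeasurableSpace X] [BorelSpace X]
    {Ω : Type*} [MeasurableSpace Ω] (μ : Measure Ω) [IsProbabilityMeasure μ]
    (ξ₁ ξ₂ : Ω → X) (hξ₁ : Measurable ξ₁) (hξ₂ : Measurable ξ₂)
    (hindep : ProbabilityTheory.IndepFun ξ₁ ξ₂ μ)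
    (α : X ≃+ X) (hα : Continuous α)
    (hsym : μ.map (fun ω => (ξ₁ ω + ξ₂ ω, ξ₁ ω + α (ξ₂ ω)))
        = μ.map (fun ω => (ξ₁ ω + ξ₂ ω, -(ξ₁ ω + α (ξ₂ ω))))) :
    ProbabilityTheory.IndepFun
      (fun ω => (ξ₁ ω + α (ξ₁ ω)) + 2 • α (ξ₂ ω))
      (fun ω => 2 • ξ₁ ω + (ξ₂ ω + α (ξ₂ ω))) μ := by
  have hαm : Measurable α := hα.measurable
  have hL : IdentDistrib (fun ω => (ξ₁ ω + ξ₂ ω, ξ₁ ω + α (ξ₂ ω)))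
      (fun ω => (ξ₁ ω + ξ₂ ω, -(ξ₁ ω + α (ξ₂ ω)))) μ μ :=
    ⟨((hξ₁.add hξ₂).prodMk (hξ₁.add (hαm.comp hξ₂))).aemeasurable,
      ((hξ₁.add hξ₂).prodMk (hξ₁.add (hαm.comp hξ₂)).neg).aemeasurable, hsym⟩
  have hF : Measurable fun p : X × X => (α p.1 + p.2, p.1 + p.2) :=
    ((hαm.comp measurable_fst).add measurable_snd).prodMk (measurable_fst.add measurable_snd)
  have hN : IndepFun (fun ω => α (ξ₁ ω) - ξ₁ ω) (fun ω => ξ₂ ω - α (ξ₂ ω)) μ :=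
    hindep.comp (hαm.sub measurable_id) (measurable_id.sub hαm)
  refine IndepFun.of_identDistrib_prodMk ?_ hN
  convert hL.comp hF using 1 <;> funext ω <;>
    simp only [Function.comp_apply, map_add, two_smul, Prod.mk.injEq] <;>
    constructor <;> abel

/-- If the conditional distribution of `L₂ = ξ₁ + αξ₂` given `L₁ = ξ₁ + ξ₂` is symmetric,
then the linear forms `M₁ = (I+α)ξ₁ + 2αξ₂` and `M₂ = 2ξ₁ + (I+α)ξ₂` are independent. -/
theorem stmt14 {X : Type*} [TopologicalSpace X] [AddCommGroup X] [IsTopologicalAddGroup X]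
    [LocallyCompactSpace X] [SecondCountableTopology X]
    [MeasurableSpace X] [BorelSpace X]
    {Ω : Type*} [MeasurableSpace Ω] (μ : Measure Ω) [IsProbabilityMeasure μ]
    (ξ₁ ξ₂ : Ω → X) (hξ₁ : Measurable ξ₁) (hξ₂ : Measurable ξ₂)
    (hindep : ProbabilityTheory.IndepFun ξ₁ ξ₂ μ)
    (α : X ≃+ X) (hα : Continuous α) (hα' : Continuous α.symm)
    (hsym : μ.map (fun ω => (ξ₁ ω + ξ₂ ω, ξ₁ ω + α (ξ₂ ω)))
        = μ.map (fun ω => (ξ₁ ω + ξ₂ ω, -(ξ₁ ω + α (ξ₂ ω))))) :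
    ProbabilityTheory.IndepFun
      (fun ω => (ξ₁ ω + α (ξ₁ ω)) + 2 • α (ξ₂ ω))
      (fun ω => 2 • ξ₁ ω + (ξ₂ ω + α (ξ₂ ω))) μ :=
  stmt14_general μ ξ₁ ξ₂ hξ₁ hξ₂ hindep α hα hsym
end
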